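/- If κ_{2i−1,2i} = κ_{2j−1,2j} = k ≠ 0, the four first integrals Φ_{2i−1,2i}, Φ_{2j−1,2j}, Ψ¹_{i,j}, Ψ²_{i,j} are closed under the canonical (magnetic) Poisson bracket and span a Lie algebra isomorphic to u(2); in particular, I₁ = Φ_{2i−1,2i} + Φ_{2j−1,2j} Poisson-commutes with all four. -/
import Mathlib


/-- Phase space `ℝ^{2n}`, `n = 2ℓ`, in block coordinates `(γ1, γ2, p1, p2)`,
with `γ1 r, γ2 r, p1 r, p2 r` denoting `γ_{2r−1}, γ_{2r}, p_{2r−1}, p_{2r}`. -/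
abbrev MagPhase (ℓ : ℕ) : Type := (Fin ℓ → ℝ) × (Fin ℓ → ℝ) × (Fin ℓ → ℝ) × (Fin ℓ → ℝ)

/-- Partial derivative in `γ_{2r−1}`. -/
noncomputable def pdG1 {ℓ : ℕ} (F : MagPhase ℓ → ℝ) (x : MagPhase ℓ) (r : Fin ℓ) : ℝ :=
  deriv (fun u => F (Function.update x.1 r u, x.2.1, x.2.2.1, x.2.2.2)) (x.1 r)

/-- Partial derivative in `γ_{2r}`. -/
noncomputable def pdG2 {ℓ : ℕ} (F : MagPhase ℓ → ℝ) (x : MagPhase ℓ) (r : Fin ℓ) : ℝ :=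
  deriv (fun u => F (x.1, Function.update x.2.1 r u, x.2.2.1, x.2.2.2)) (x.2.1 r)

/-- Partial derivative in `p_{2r−1}`. -/
noncomputable def pdP1 {ℓ : ℕ} (F : MagPhase ℓ → ℝ) (x : MagPhase ℓ) (r : Fin ℓ) : ℝ :=
  deriv (fun u => F (x.1, x.2.1, Function.update x.2.2.1 r u, x.2.2.2)) (x.2.2.1 r)

/-- Partial derivative in `p_{2r}`. -/
noncomputable def pdP2 {ℓ : ℕ} (F : MagPhase ℓ → ℝ) (x : MagPhase ℓ) (r : Fin ℓ) : ℝ :=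
  deriv (fun u => F (x.1, x.2.1, x.2.2.1, Function.update x.2.2.2 r u)) (x.2.2.2 r)

/-- The magnetic Poisson bracket determined by the twisted symplectic form
`Σ dp_k∧dγ_k + s Σ_r κ_r dγ_{2r−1}∧dγ_{2r}`. -/
noncomputable def magPB {ℓ : ℕ} (s : ℝ) (κ : Fin ℓ → ℝ) (F G : MagPhase ℓ → ℝ) :
    MagPhase ℓ → ℝ := fun x =>
  (∑ r, (pdG1 F x r * pdP1 G x r - pdP1 F x r * pdG1 G x r
    + pdG2 F x r * pdP2 G x r - pdP2 F x r * pdG2 G x r))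
  + s * ∑ r, κ r * (pdP1 F x r * pdP2 G x r - pdP2 F x r * pdP1 G x r)

/-- The linear integral `Φ_{2r−1,2r}` with parameter `κ_{2r−1,2r} = k`. -/
noncomputable def PhiFun {ℓ : ℕ} (s k : ℝ) (r : Fin ℓ) : MagPhase ℓ → ℝ := fun x =>
  x.1 r * x.2.2.2 r - x.2.1 r * x.2.2.1 r + s * k / 2 * ((x.1 r) ^ 2 + (x.2.1 r) ^ 2)

/-- The integral `Ψ¹_{i,j}` (common parameter `k`). -/
noncomputable def Psi1Fun {ℓ : ℕ} (s k : ℝ) (i j : Fin ℓ) : MagPhase ℓ → ℝ := fun x =>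
  (x.2.1 i * x.2.2.1 j - x.1 j * x.2.2.2 i) - (x.1 i * x.2.2.2 j - x.2.1 j * x.2.2.1 i)
    - s * k * (x.1 i * x.1 j + x.2.1 i * x.2.1 j)

/-- The integral `Ψ²_{i,j}` (common parameter `k`). -/
noncomputable def Psi2Fun {ℓ : ℕ} (s k : ℝ) (i j : Fin ℓ) : MagPhase ℓ → ℝ := fun x =>
  (x.1 i * x.2.2.1 j - x.1 j * x.2.2.1 i) + (x.2.1 i * x.2.2.2 j - x.2.1 j * x.2.2.2 i)
    - s * k * (x.1 i * x.2.1 j - x.2.1 i * x.1 j)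

noncomputable def combo {ℓ : ℕ} (s k : ℝ) (i j : Fin ℓ) (a b c d : ℝ) : MagPhase ℓ → ℝ :=
  fun x => a * PhiFun s k i x + b * PhiFun s k j x + c * Psi1Fun s k i j x + d * Psi2Fun s k i j x

private lemma deriv_eq_quad (f : ℝ → ℝ) (a b u : ℝ)
    (h : ∀ v, f v = a*(v*v) + b*v + f 0) : deriv f u = 2*a*u + b := by
  have hf : HasDerivAt f (a*(1*u+u*1) + b*1) u := by
    rw [funext h]
    exact ((((hasDerivAt_id u).mul (hasDerivAt_id u)).const_mul a).add
      ((hasDerivAt_id u).const_mul b)).add_const (f 0)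
  rw [hf.deriv]; ring

private lemma pdG1_combo {ℓ : ℕ} (i j : Fin ℓ) (hij : i ≠ j) (s k a b c d : ℝ)
    (x : MagPhase ℓ) (r : Fin ℓ) :
    pdG1 (combo s k i j a b c d) x r =
      if r = i then
        a*(x.2.2.2 i + s*k*x.1 i) + c*(-(x.2.2.2 j) - s*k*x.1 j) + d*(x.2.2.1 j - s*k*x.2.1 j)
      else if r = j then
        b*(x.2.2.2 j + s*k*x.1 j) + c*(-(x.2.2.2 i) - s*k*x.1 i) + d*(-(x.2.2.1 i) + s*k*x.2.1 i)
      else 0 := by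
  unfold pdG1
  by_cases h1 : r = i
  · subst h1
    rw [if_pos rfl,
      deriv_eq_quad _ (a*(s*k/2))
        (a*(x.2.2.2 r) + c*(-(x.2.2.2 j) - s*k*(x.1 j)) + d*((x.2.2.1 j) - s*k*(x.2.1 j))) _
        (fun v => by
          simp [combo, PhiFun, Psi1Fun, Psi2Fun, Function.update_self,
            Function.update_of_ne (Ne.symm hij)]
          ring)]
    ring
  · rw [if_neg h1]
    by_cases h2 : r = j
    · subst h2
      rw [if_pos rfl,
        deriv_eq_quad _ (b*(s*k/2))
          (b*(x.2.2.2 r) + c*(-(x.2.2.2 i) - s*k*(x.1 i)) + d*(-(x.2.2.1 i) + s*k*(x.2.1 i))) _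
          (fun v => by
            simp [combo, PhiFun, Psi1Fun, Psi2Fun, Function.update_self,
              Function.update_of_ne hij]
            ring)]
      ring
    · rw [if_neg h2]
      simp [combo, PhiFun, Psi1Fun, Psi2Fun, Function.update_of_ne (Ne.symm h1),
        Function.update_of_ne (Ne.symm h2)]

private lemma pdG2_combo {ℓ : ℕ} (i j : Fin ℓ) (hij : i ≠ j) (s k a b c d : ℝ)
    (x : MagPhase ℓ) (r : Fin ℓ) :
    pdG2 (combo s k i j a b c d) x r =
      if r = i then
        a*(-(x.2.2.1 i) + s*k*x.2.1 i) + c*(x.2.2.1 j - s*k*x.2.1 j) + d*(x.2.2.2 j + s*k*x.1 j)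
      else if r = j then
        b*(-(x.2.2.1 j) + s*k*x.2.1 j) + c*(x.2.2.1 i - s*k*x.2.1 i) + d*(-(x.2.2.2 i) - s*k*x.1 i)
      else 0 := by
  unfold pdG2
  by_cases h1 : r = i
  · subst h1
    rw [if_pos rfl,
      deriv_eq_quad _ (a*(s*k/2))
        (a*(-(x.2.2.1 r)) + c*((x.2.2.1 j) - s*k*(x.2.1 j)) + d*((x.2.2.2 j) + s*k*(x.1 j))) _
        (fun v => by
          simp [combo, PhiFun, Psi1Fun, Psi2Fun, Function.update_self,
            Function.update_of_ne (Ne.symm hij)]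
          ring)]
    ring
  · rw [if_neg h1]
    by_cases h2 : r = j
    · subst h2
      rw [if_pos rfl,
        deriv_eq_quad _ (b*(s*k/2))
          (b*(-(x.2.2.1 r)) + c*((x.2.2.1 i) - s*k*(x.2.1 i)) + d*(-(x.2.2.2 i) - s*k*(x.1 i))) _
          (fun v => by
            simp [combo, PhiFun, Psi1Fun, Psi2Fun, Function.update_self,
              Function.update_of_ne hij]
            ring)]
      ring
    · rw [if_neg h2]
      simp [combo, PhiFun, Psi1Fun, Psi2Fun, Function.update_of_ne (Ne.symm h1),
        Function.update_of_ne (Ne.symm h2)]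

private lemma pdP1_combo {ℓ : ℕ} (i j : Fin ℓ) (hij : i ≠ j) (s k a b c d : ℝ)
    (x : MagPhase ℓ) (r : Fin ℓ) :
    pdP1 (combo s k i j a b c d) x r =
      if r = i then -(a*x.2.1 i) + c*x.2.1 j - d*x.1 j
      else if r = j then -(b*x.2.1 j) + c*x.2.1 i + d*x.1 i
      else 0 := by
  unfold pdP1
  by_cases h1 : r = i
  · subst h1
    rw [if_pos rfl,
      deriv_eq_quad _ 0 (-(a*x.2.1 r) + c*x.2.1 j - d*x.1 j) _
        (fun v => by
          simp [combo, PhiFun, Psi1Fun, Psi2Fun, Function.update_self,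
            Function.update_of_ne (Ne.symm hij)]
          ring)]
    ring
  · rw [if_neg h1]
    by_cases h2 : r = j
    · subst h2
      rw [if_pos rfl,
        deriv_eq_quad _ 0 (-(b*x.2.1 r) + c*x.2.1 i + d*x.1 i) _
          (fun v => by
            simp [combo, PhiFun, Psi1Fun, Psi2Fun, Function.update_self,
              Function.update_of_ne hij]
            ring)]
      ring
    · rw [if_neg h2]
      simp [combo, PhiFun, Psi1Fun, Psi2Fun, Function.update_of_ne (Ne.symm h1),
        Function.update_of_ne (Ne.symm h2)]

private lemma pdP2_combo {ℓ : ℕ} (i j : Fin ℓ) (hij : i ≠ j) (s k a b c d : ℝ)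
    (x : MagPhase ℓ) (r : Fin ℓ) :
    pdP2 (combo s k i j a b c d) x r =
      if r = i then a*x.1 i - c*x.1 j - d*x.2.1 j
      else if r = j then b*x.1 j - c*x.1 i + d*x.2.1 i
      else 0 := by
  unfold pdP2
  by_cases h1 : r = i
  · subst h1
    rw [if_pos rfl,
      deriv_eq_quad _ 0 (a*x.1 r - c*x.1 j - d*x.2.1 j) _
        (fun v => by
          simp [combo, PhiFun, Psi1Fun, Psi2Fun, Function.update_self,
            Function.update_of_ne (Ne.symm hij)]
          ring)]
    ring
  · rw [if_neg h1]
    by_cases h2 : r = j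
    · subst h2
      rw [if_pos rfl,
        deriv_eq_quad _ 0 (b*x.1 r - c*x.1 i + d*x.2.1 i) _
          (fun v => by
            simp [combo, PhiFun, Psi1Fun, Psi2Fun, Function.update_self,
              Function.update_of_ne hij]
            ring)]
      ring
    · rw [if_neg h2]
      simp [combo, PhiFun, Psi1Fun, Psi2Fun, Function.update_of_ne (Ne.symm h1),
        Function.update_of_ne (Ne.symm h2)]

private lemma sum_two {ℓ : ℕ} (i j : Fin ℓ) (hij : i ≠ j) (f : Fin ℓ → ℝ)
    (h : ∀ r, r ≠ i → r ≠ j → f r = 0) : ∑ r, f r = f i + f j := by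
  rw [← Finset.sum_pair hij]
  refine (Finset.sum_subset (Finset.subset_univ _) ?_).symm
  intro r _ hr
  simp only [Finset.mem_insert, Finset.mem_singleton, not_or] at hr
  exact h r hr.1 hr.2

private lemma master {ℓ : ℕ} (s k : ℝ) (κ : Fin ℓ → ℝ) (i j : Fin ℓ) (hij : i ≠ j)
    (hki : κ i = k) (hkj : κ j = k) (a b c d a' b' c' d' : ℝ) :
    magPB s κ (combo s k i j a b c d) (combo s k i j a' b' c' d') =
      combo s k i j (-2*(c*d' - d*c')) (2*(c*d' - d*c'))
        ((a*d' - d*a') - (b*d' - d*b')) (-(a*c' - c*a') + (b*c' - c*b')) := by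
  funext x
  show _ = _
  unfold magPB
  rw [sum_two i j hij _ (fun r hri hrj => by
        simp [pdG1_combo i j hij, pdG2_combo i j hij, pdP1_combo i j hij,
          pdP2_combo i j hij, hri, hrj]),
      sum_two i j hij _ (fun r hri hrj => by
        simp [pdP1_combo i j hij, pdP2_combo i j hij, hri, hrj])]
  simp only [pdG1_combo i j hij, pdG2_combo i j hij, pdP1_combo i j hij,
    pdP2_combo i j hij, if_pos rfl, if_true, eq_self_iff_true, if_neg hij, if_neg (Ne.symm hij), hki, hkj]
  simp only [combo, PhiFun, Psi1Fun, Psi2Fun]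
  ring

private lemma combo_inj {ℓ : ℕ} (i j : Fin ℓ) (hij : i ≠ j) (s k a b c d a' b' c' d' : ℝ)
    (h : combo s k i j a b c d = combo s k i j a' b' c' d') :
    a = a' ∧ b = b' ∧ c = c' ∧ d = d' := by
  have h1 := congrFun h (Function.update (0 : Fin ℓ → ℝ) i 1, 0, 0, (0 : Fin ℓ → ℝ))
  have h2 := congrFun h (Function.update (0 : Fin ℓ → ℝ) i 1, 0, 0,
    Function.update (0 : Fin ℓ → ℝ) i 1)
  have h3 := congrFun h (Function.update (0 : Fin ℓ → ℝ) j 1, 0, 0, (0 : Fin ℓ → ℝ))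
  have h4 := congrFun h (Function.update (0 : Fin ℓ → ℝ) j 1, 0, 0,
    Function.update (0 : Fin ℓ → ℝ) j 1)
  have h5 := congrFun h (Function.update (0 : Fin ℓ → ℝ) i 1, 0, 0,
    Function.update (0 : Fin ℓ → ℝ) j 1)
  have h6 := congrFun h (Function.update (0 : Fin ℓ → ℝ) i 1, 0,
    Function.update (0 : Fin ℓ → ℝ) j 1, (0 : Fin ℓ → ℝ))
  simp only [combo, PhiFun, Psi1Fun, Psi2Fun, Function.update_self,
    Function.update_of_ne hij, Function.update_of_ne (Ne.symm hij),
    Pi.zero_apply] at h1 h2 h3 h4 h5 h6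
  refine ⟨by linear_combination h2 - h1, by linear_combination h4 - h3,
    by linear_combination h1 - h5, by linear_combination h6 - h1⟩

private lemma skew_entries (X : Matrix (Fin 2) (Fin 2) ℂ) (hX : X.conjTranspose = -X) :
    (X 0 0).re = 0 ∧ (X 1 1).re = 0 ∧ (X 1 0).re = -(X 0 1).re ∧ (X 1 0).im = (X 0 1).im := by
  have h00 := congrFun (congrFun hX 0) 0
  have h11 := congrFun (congrFun hX 1) 1
  have h01 := congrFun (congrFun hX 0) 1
  simp only [Matrix.conjTranspose_apply, Matrix.neg_apply, Complex.star_def] at h00 h11 h01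
  have r00 := congrArg Complex.re h00
  have r11 := congrArg Complex.re h11
  have r01 := congrArg Complex.re h01
  have i01 := congrArg Complex.im h01
  simp only [Complex.conj_re, Complex.conj_im, Complex.neg_re, Complex.neg_im] at r00 r11 r01 i01
  exact ⟨by linarith, by linarith, by linarith, by linarith⟩

/-- if `κ_{2i−1,2i} = κ_{2j−1,2j} = k ≠ 0`, the four first
integrals `Φ_{2i−1,2i}, Φ_{2j−1,2j}, Ψ¹_{i,j}, Ψ²_{i,j}` are closed under the
magnetic Poisson bracket and span a Lie algebra isomorphic to `u(2)`; in
particular `I₁ = Φ_{2i−1,2i} + Φ_{2j−1,2j}` Poisson-commutes with all four. -/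
theorem four_integrals_u2
    (ℓ : ℕ) (s k : ℝ) (hk : k ≠ 0) (κ : Fin ℓ → ℝ) (i j : Fin ℓ) (hij : i ≠ j)
    (hki : κ i = k) (hkj : κ j = k) :
    let S : Set (MagPhase ℓ → ℝ) :=
      {PhiFun s k i, PhiFun s k j, Psi1Fun s k i j, Psi2Fun s k i j}
    (∀ F ∈ S, ∀ G ∈ S, magPB s κ F G ∈ Submodule.span ℝ S) ∧
    (∀ F ∈ S, magPB s κ (PhiFun s k i + PhiFun s k j) F = 0) ∧
    (∃ φ : Matrix (Fin 2) (Fin 2) ℂ → (MagPhase ℓ → ℝ),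
      Set.InjOn φ {X | X.conjTranspose = -X} ∧
      (∀ X Y, X.conjTranspose = -X → Y.conjTranspose = -Y →
        φ (X + Y) = φ X + φ Y) ∧
      (∀ (r : ℝ) (X), X.conjTranspose = -X → φ ((r : ℂ) • X) = r • φ X) ∧
      (∀ X Y, X.conjTranspose = -X → Y.conjTranspose = -Y →
        φ (X * Y - Y * X) = magPB s κ (φ X) (φ Y)) ∧
      φ '' {X | X.conjTranspose = -X} = (Submodule.span ℝ S : Set (MagPhase ℓ → ℝ))) := by
  intro S
  -- basic equalities
  have hPhiI : PhiFun s k i = combo s k i j 1 0 0 0 := by funext x; simp [combo]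
  have hPhiJ : PhiFun s k j = combo s k i j 0 1 0 0 := by funext x; simp [combo]
  have hPsi1 : Psi1Fun s k i j = combo s k i j 0 0 1 0 := by funext x; simp [combo]
  have hPsi2 : Psi2Fun s k i j = combo s k i j 0 0 0 1 := by funext x; simp [combo]
  have hsum : PhiFun s k i + PhiFun s k j = combo s k i j 1 1 0 0 := by
    funext x; simp [combo, Pi.add_apply]
  have m1 : PhiFun s k i ∈ S := Set.mem_insert _ _
  have m2 : PhiFun s k j ∈ S := Set.mem_insert_of_mem _ (Set.mem_insert _ _)
  have m3 : Psi1Fun s k i j ∈ S :=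
    Set.mem_insert_of_mem _ (Set.mem_insert_of_mem _ (Set.mem_insert _ _))
  have m4 : Psi2Fun s k i j ∈ S :=
    Set.mem_insert_of_mem _ (Set.mem_insert_of_mem _ (Set.mem_insert_of_mem _ rfl))
  have hmem : ∀ a b c d : ℝ, combo s k i j a b c d ∈ Submodule.span ℝ S := by
    intro a b c d
    have he : combo s k i j a b c d = a • PhiFun s k i + b • PhiFun s k j
        + c • Psi1Fun s k i j + d • Psi2Fun s k i j := by
      funext x; simp [combo, Pi.add_apply, Pi.smul_apply, smul_eq_mul]
    rw [he]
    exact Submodule.add_mem _ (Submodule.add_mem _ (Submodule.add_mem _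
      (Submodule.smul_mem _ _ (Submodule.subset_span m1))
      (Submodule.smul_mem _ _ (Submodule.subset_span m2)))
      (Submodule.smul_mem _ _ (Submodule.subset_span m3)))
      (Submodule.smul_mem _ _ (Submodule.subset_span m4))
  have hcc : ∀ p q r t p' q' r' t' : ℝ, p = p' → q = q' → r = r' → t = t' →
      combo s k i j p q r t = combo s k i j p' q' r' t' := by
    rintro p q r t p' q' r' t' rfl rfl rfl rfl; rfl
  refine ⟨?_, ?_, ?_⟩
  · -- closure
    intro F hF G hG
    have hF' : F = PhiFun s k i ∨ F = PhiFun s k j ∨ F = Psi1Fun s k i j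
        ∨ F = Psi2Fun s k i j := hF
    have hG' : G = PhiFun s k i ∨ G = PhiFun s k j ∨ G = Psi1Fun s k i j
        ∨ G = Psi2Fun s k i j := hG
    rcases hF' with rfl | rfl | rfl | rfl <;> rcases hG' with rfl | rfl | rfl | rfl <;>
      (simp only [hPhiI, hPhiJ, hPsi1, hPsi2]; rw [master s k κ i j hij hki hkj];
        exact hmem _ _ _ _)
  · -- I₁ commutes
    intro F hF
    have hF' : F = PhiFun s k i ∨ F = PhiFun s k j ∨ F = Psi1Fun s k i j
        ∨ F = Psi2Fun s k i j := hF
    rw [hsum]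
    rcases hF' with rfl | rfl | rfl | rfl <;>
      (simp only [hPhiI, hPhiJ, hPsi1, hPsi2]; rw [master s k κ i j hij hki hkj];
        funext x; simp only [combo, Pi.zero_apply]; ring)
  · -- u(2)
    have hADD : ∀ X Y : Matrix (Fin 2) (Fin 2) ℂ,
        combo s k i j (-((X+Y) 0 0).im) (-((X+Y) 1 1).im)
          ((((X+Y) 0 1).re - ((X+Y) 1 0).re)/2) ((((X+Y) 0 1).im + ((X+Y) 1 0).im)/2) =
        combo s k i j (-(X 0 0).im) (-(X 1 1).im)
          (((X 0 1).re - (X 1 0).re)/2) (((X 0 1).im + (X 1 0).im)/2)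
        + combo s k i j (-(Y 0 0).im) (-(Y 1 1).im)
          (((Y 0 1).re - (Y 1 0).re)/2) (((Y 0 1).im + (Y 1 0).im)/2) := by
      intro X Y; funext pt
      simp only [combo, Pi.add_apply, Matrix.add_apply, Complex.add_re, Complex.add_im]
      ring
    have hSMUL : ∀ (r : ℝ) (X : Matrix (Fin 2) (Fin 2) ℂ),
        combo s k i j (-(((r:ℂ) • X) 0 0).im) (-(((r:ℂ) • X) 1 1).im)
          (((((r:ℂ) • X) 0 1).re - (((r:ℂ) • X) 1 0).re)/2)
          (((((r:ℂ) • X) 0 1).im + (((r:ℂ) • X) 1 0).im)/2) =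
        r • combo s k i j (-(X 0 0).im) (-(X 1 1).im)
          (((X 0 1).re - (X 1 0).re)/2) (((X 0 1).im + (X 1 0).im)/2) := by
      intro r X; funext pt
      simp only [combo, Pi.smul_apply, smul_eq_mul, Matrix.smul_apply,
        Complex.mul_im, Complex.mul_re, Complex.ofReal_re, Complex.ofReal_im]
      ring
    refine ⟨fun X => combo s k i j (-(X 0 0).im) (-(X 1 1).im)
      (((X 0 1).re - (X 1 0).re)/2) (((X 0 1).im + (X 1 0).im)/2), ?_, ?_, ?_, ?_, ?_⟩
    · -- injectivity
      intro X hX Y hY hXY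
      obtain ⟨ex1, ex2, ex3, ex4⟩ := skew_entries X hX
      obtain ⟨ey1, ey2, ey3, ey4⟩ := skew_entries Y hY
      have hXY' : combo s k i j (-(X 0 0).im) (-(X 1 1).im)
          (((X 0 1).re - (X 1 0).re)/2) (((X 0 1).im + (X 1 0).im)/2)
          = combo s k i j (-(Y 0 0).im) (-(Y 1 1).im)
          (((Y 0 1).re - (Y 1 0).re)/2) (((Y 0 1).im + (Y 1 0).im)/2) := hXY
      obtain ⟨e1, e2, e3, e4⟩ := combo_inj i j hij s k _ _ _ _ _ _ _ _ hXY'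
      have q1 : (X 0 0).im = (Y 0 0).im := by linarith
      have q2 : (X 1 1).im = (Y 1 1).im := by linarith
      rw [ex3, ey3] at e3
      rw [ex4, ey4] at e4
      have q3 : (X 0 1).re = (Y 0 1).re := by linarith
      have q4 : (X 0 1).im = (Y 0 1).im := by linarith
      ext u v
      fin_cases u <;> fin_cases v
      · exact Complex.ext (ex1.trans ey1.symm) q1
      · exact Complex.ext q3 q4
      · exact Complex.ext (show (X 1 0).re = (Y 1 0).re by rw [ex3, ey3, q3])
          (show (X 1 0).im = (Y 1 0).im by rw [ex4, ey4, q4])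
      · exact Complex.ext (ex2.trans ey2.symm) q2
    · exact fun X Y _ _ => hADD X Y
    · exact fun r X _ => hSMUL r X
    · -- bracket
      intro X Y hX hY
      obtain ⟨ex1, ex2, ex3, ex4⟩ := skew_entries X hX
      obtain ⟨ey1, ey2, ey3, ey4⟩ := skew_entries Y hY
      refine Eq.trans (hcc _ _ _ _ _ _ _ _ ?_ ?_ ?_ ?_)
        (master s k κ i j hij hki hkj _ _ _ _ _ _ _ _).symm <;>
        (simp only [Matrix.sub_apply, Matrix.mul_apply, Fin.sum_univ_two,
          Complex.sub_re, Complex.sub_im, Complex.add_re, Complex.add_im,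
          Complex.mul_re, Complex.mul_im, ex1, ex2, ex3, ex4, ey1, ey2, ey3, ey4]; ring)
    · -- image
      apply Set.Subset.antisymm
      · rintro f ⟨X, -, rfl⟩
        exact hmem _ _ _ _
      · intro f hf
        have hf' : f ∈ Submodule.span ℝ S := hf
        refine Submodule.span_induction ?_ ?_ ?_ ?_ hf'
        · intro g hg
          have hg' : g = PhiFun s k i ∨ g = PhiFun s k j ∨ g = Psi1Fun s k i j
              ∨ g = Psi2Fun s k i j := hg
          rcases hg' with rfl | rfl | rfl | rfl
          · refine ⟨!![-Complex.I, 0; 0, 0], ?_, ?_⟩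
            · show Matrix.conjTranspose _ = _
              ext u v
              fin_cases u <;> fin_cases v <;>
                simp [Matrix.conjTranspose_apply, Complex.star_def]
            · refine Eq.trans (hcc _ _ _ _ 1 0 0 0 ?_ ?_ ?_ ?_) hPhiI.symm <;> norm_num
          · refine ⟨!![0, 0; 0, -Complex.I], ?_, ?_⟩
            · show Matrix.conjTranspose _ = _
              ext u v
              fin_cases u <;> fin_cases v <;>
                simp [Matrix.conjTranspose_apply, Complex.star_def]
            · refine Eq.trans (hcc _ _ _ _ 0 1 0 0 ?_ ?_ ?_ ?_) hPhiJ.symm <;> norm_num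
          · refine ⟨!![0, 1; -1, 0], ?_, ?_⟩
            · show Matrix.conjTranspose _ = _
              ext u v
              fin_cases u <;> fin_cases v <;>
                simp [Matrix.conjTranspose_apply, Complex.star_def]
            · refine Eq.trans (hcc _ _ _ _ 0 0 1 0 ?_ ?_ ?_ ?_) hPsi1.symm <;> norm_num
          · refine ⟨!![0, Complex.I; Complex.I, 0], ?_, ?_⟩
            · show Matrix.conjTranspose _ = _
              ext u v
              fin_cases u <;> fin_cases v <;>
                simp [Matrix.conjTranspose_apply, Complex.star_def]
            · refine Eq.trans (hcc _ _ _ _ 0 0 0 1 ?_ ?_ ?_ ?_) hPsi2.symm <;> norm_num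
        · exact ⟨0, by simp, by funext pt; simp [combo]⟩
        · rintro g h _ _ ⟨X, hX, rfl⟩ ⟨Y, hY, rfl⟩
          exact ⟨X + Y, by
            show Matrix.conjTranspose _ = _
            rw [Matrix.conjTranspose_add, hX, hY, neg_add], hADD X Y⟩
        · rintro r g _ ⟨X, hX, rfl⟩
          exact ⟨(r : ℂ) • X, by
            show Matrix.conjTranspose _ = _
            rw [Matrix.conjTranspose_smul, hX]
            simp [Complex.star_def, Complex.conj_ofReal], hSMUL r X⟩
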